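/- In the non-reduced irreducible root system of type BC_ℓ there are no low triples. (For BC_ℓ the weight lattice equals the root lattice of C_ℓ and Σ_{i=h}^ℓ αᵢ = ω_h − ω_{h−1}; hence for any dominant λ appearing in a low triple and any index h, one could subtract Σ_{i=h}^ℓ αᵢ if h ∈ supp λ, contradicting minimality, so supp λ = supp μ = ∅ and λ = μ = 0, which violates ν + Σαᵢ ≤ λ+μ.) -/

import Mathlib

/-! For a dominant weight `x` with `⟨x, α_h∨⟩ > 0`, subtracting
`β_h = α_h + ⋯ + α_ℓ = ω_h - ω_{h-1}` keeps it dominant: integrality forces `⟨x, α_h∨⟩ ≥ 1`,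
and `⟨x, α_ℓ∨⟩ ≥ 2` because `2α_ℓ` is a root. As `β_h ≤ ∑ α_i`, minimality of a low triple
`(λ, μ, ν)` therefore forces `λ` and `μ` to be orthogonal to every simple root. Then
`z = λ + μ - ν = ∑ (d_i + 1) α_i` satisfies `⟪z, α_j⟫ = -⟪ν, α_j⟫ ≤ 0` for all `j`, so
`⟪z, z⟫ ≤ 0` and `z = 0`, which is impossible. -/

open scoped RealInnerProductSpace

noncomputable section

variable {E : Type*} [NormedAddCommGroup E] [InnerProductSpace ℝ E]

/-- The pairing `⟨x, α∨⟩ = 2(x,α)/(α,α)`. -/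
def cpair (x α : E) : ℝ := 2 * ⟪x, α⟫ / ⟪α, α⟫

/-- Reflection in the hyperplane orthogonal to `α`. -/
def wrefl (α x : E) : E := x - cpair x α • α

/-- An irreducible, possibly non-reduced, root system with a chosen base. -/
structure NRRootSystemData (ℓ : ℕ) (E : Type*) [NormedAddCommGroup E]
    [InnerProductSpace ℝ E] where
  roots : Finset E
  simple : Fin ℓ → E
  simple_mem : ∀ i, simple i ∈ roots
  root_ne_zero : ∀ α ∈ roots, α ≠ 0
  cpair_int : ∀ α ∈ roots, ∀ β ∈ roots, ∃ n : ℤ, cpair β α = (n : ℝ)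
  reflect_mem : ∀ α ∈ roots, ∀ β ∈ roots, wrefl α β ∈ roots
  simple_indep : LinearIndependent ℝ simple
  root_decomp : ∀ α ∈ roots,
    (∃ c : Fin ℓ → ℕ, α = ∑ i, (c i : ℝ) • simple i) ∨
    (∃ c : Fin ℓ → ℕ, α = -∑ i, (c i : ℝ) • simple i)
  irred : ∀ S : Finset (Fin ℓ), S.Nonempty →
    (∀ i ∈ S, ∀ j ∉ S, ⟪simple i, simple j⟫ = 0) → S = Finset.univ

namespace NRRootSystemData

variable {ℓ : ℕ} (R : NRRootSystemData ℓ E)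

/-- Integral weights: `⟨x, α∨⟩ ∈ ℤ` for every root `α` (for BC this is the
C-type weight lattice, since `2α_ℓ` is a root). -/
def IsIntegral (x : E) : Prop := ∀ α ∈ R.roots, ∃ n : ℤ, cpair x α = (n : ℝ)

/-- Dominant (integral) weights. -/
def IsDominant (x : E) : Prop :=
  R.IsIntegral x ∧ ∀ i, 0 ≤ cpair x (R.simple i)

/-- Dominant order: `R.wle μ λ` means `μ ≤ λ`. -/
def wle (μ lam : E) : Prop :=
  ∃ c : Fin ℓ → ℕ, lam - μ = ∑ i, (c i : ℝ) • R.simple i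

/-- Low triples of dominant weights. -/
def LowTriple (lam mu nu : E) : Prop :=
  R.IsDominant lam ∧ R.IsDominant mu ∧ R.IsDominant nu ∧
  (∀ lam' mu' : E, R.IsDominant lam' → R.IsDominant mu' →
    R.wle lam' lam → R.wle mu' mu → R.wle nu (lam' + mu') → lam' = lam ∧ mu' = mu) ∧
  R.wle (nu + ∑ i, R.simple i) (lam + mu)

/-- `R` is of type BC_ℓ: the simple roots form a B_ℓ Cartan matrix, `2α_ℓ` is a
root, and `2α_i` is not a root for `i < ℓ`. -/
def IsTypeBC : Prop :=
  (∀ i j : Fin ℓ, cpair (R.simple j) (R.simple i) =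
    if i = j then 2
    else if (j : ℕ) + 1 = (i : ℕ) ∧ (i : ℕ) = ℓ - 1 then -2
    else if (i : ℕ) + 1 = (j : ℕ) ∨ (j : ℕ) + 1 = (i : ℕ) then -1 else 0) ∧
  ∀ i : Fin ℓ, ((i : ℕ) = ℓ - 1 → (2 : ℝ) • R.simple i ∈ R.roots) ∧
    ((i : ℕ) < ℓ - 1 → (2 : ℝ) • R.simple i ∉ R.roots)

end NRRootSystemData

open Finset

lemma cpair_add (x y α : E) : cpair (x + y) α = cpair x α + cpair y α := by
  simp only [cpair, inner_add_left]; ring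

lemma cpair_sub (x y α : E) : cpair (x - y) α = cpair x α - cpair y α := by
  simp only [cpair, inner_sub_left]; ring

lemma cpair_smul (c : ℝ) (x α : E) : cpair (c • x) α = c * cpair x α := by
  simp only [cpair, real_inner_smul_left]; ring

lemma cpair_sum {ι : Type*} (s : Finset ι) (f : ι → E) (α : E) :
    cpair (∑ i ∈ s, f i) α = ∑ i ∈ s, cpair (f i) α := by
  simp only [cpair, sum_inner, mul_sum, sum_div]

lemma cpair_two_smul_right (x : E) {α : E} (hα : α ≠ 0) :
    cpair x ((2 : ℝ) • α) = cpair x α / 2 := by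
  have : ⟪α, α⟫ ≠ 0 := inner_self_ne_zero.mpr hα
  simp only [cpair, real_inner_smul_right, real_inner_smul_left]
  field_simp

lemma cpair_nonpos_iff (x : E) {α : E} (hα : α ≠ 0) : cpair x α ≤ 0 ↔ ⟪x, α⟫ ≤ 0 := by
  have : 0 < ⟪α, α⟫ := real_inner_self_pos.mpr hα
  rw [cpair, div_nonpos_iff]
  constructor
  · rintro (⟨-, h⟩ | ⟨h, -⟩) <;> linarith
  · intro h; exact Or.inr ⟨by linarith, this.le⟩

lemma sum_smul_eq_zero_of_inner_nonpos {ι : Type*} (s : Finset ι) (e : ι → ℝ) (v : ι → E)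
    (he : ∀ i ∈ s, 0 ≤ e i) (hv : ∀ i ∈ s, ⟪∑ j ∈ s, e j • v j, v i⟫ ≤ 0) :
    ∑ j ∈ s, e j • v j = 0 := by
  set z := ∑ j ∈ s, e j • v j
  have hz : ⟪z, z⟫ ≤ 0 := by
    calc ⟪z, z⟫ = ∑ i ∈ s, e i * ⟪z, v i⟫ := by
          simp only [z, inner_sum (x := z), real_inner_smul_right]
      _ ≤ 0 := sum_nonpos fun i hi => mul_nonpos_of_nonneg_of_nonpos (he i hi) (hv i hi)
  exact inner_self_eq_zero.mp (le_antisymm hz real_inner_self_nonneg)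

/-- The Cartan matrix of type `B_ℓ` in the convention of `IsTypeBC`:
`cartanB ℓ i j = ⟨α_j, α_i∨⟩`, with `α_{ℓ-1}` short. -/
def cartanB (ℓ : ℕ) (i j : Fin ℓ) : ℝ :=
  if i = j then 2
  else if (j : ℕ) + 1 = (i : ℕ) ∧ (i : ℕ) = ℓ - 1 then -2
  else if (i : ℕ) + 1 = (j : ℕ) ∨ (j : ℕ) + 1 = (i : ℕ) then -1 else 0

/-- `α_h + ⋯ + α_{ℓ-1} = ω_h - ω_{h-1}` in `C_ℓ` weight coordinates. -/
lemma sum_Ici_cartanB (ℓ : ℕ) (h j : Fin ℓ) :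
    ∑ i : Fin ℓ, (if h ≤ i then cartanB ℓ j i else 0) =
      if j = h then (if (h : ℕ) = ℓ - 1 then 2 else 1)
      else if (j : ℕ) + 1 = h then -1 else 0 := by
  obtain ⟨j, hj⟩ := j
  obtain ⟨h, hh⟩ := h
  simp only [cartanB, Fin.le_iff_val_le_val, Fin.ext_iff]
  rw [Fin.sum_univ_eq_sum_range (fun i => if h ≤ i then
      (if j = i then (2 : ℝ)
        else if i + 1 = j ∧ j = ℓ - 1 then -2
        else if j + 1 = i ∨ i + 1 = j then -1 else 0) else 0)]
  have spikes : ∀ i, (if h ≤ i then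
      (if j = i then (2 : ℝ)
        else if i + 1 = j ∧ j = ℓ - 1 then -2
        else if j + 1 = i ∨ i + 1 = j then -1 else 0) else 0) =
      (if j = i then (if h ≤ j then 2 else 0) else 0) +
      (if j + 1 = i then (if h ≤ j + 1 then -1 else 0) else 0) +
      (if j - 1 = i then (if h + 1 ≤ j then (if j = ℓ - 1 then -2 else -1) else 0) else 0) := by
    intro i
    split_ifs <;> first | omega | norm_num
  simp only [spikes, sum_add_distrib, sum_ite_eq, mem_range]
  split_ifs <;> first | omega | norm_num

namespace NRRootSystemData

variable {ℓ : ℕ} (R : NRRootSystemData ℓ E)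

def natComb (c : Fin ℓ → ℕ) : E := ∑ i, (c i : ℝ) • R.simple i

lemma natComb_add (c d : Fin ℓ → ℕ) : R.natComb (c + d) = R.natComb c + R.natComb d := by
  simp only [natComb, Pi.add_apply, Nat.cast_add, add_smul, sum_add_distrib]

lemma natComb_tsub {c d : Fin ℓ → ℕ} (h : d ≤ c) :
    R.natComb (c - d) = R.natComb c - R.natComb d := by
  simp only [natComb, Pi.sub_apply, ← sum_sub_distrib, ← sub_smul]
  exact sum_congr rfl fun i _ => by rw [Nat.cast_sub (h i)]

lemma natComb_one : R.natComb 1 = ∑ i, R.simple i := by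
  simp [natComb]

lemma natComb_eq_zero_iff {c : Fin ℓ → ℕ} : R.natComb c = 0 ↔ c = 0 := by
  refine ⟨fun h => funext fun i => ?_, fun h => by simp [natComb, h]⟩
  exact_mod_cast Fintype.linearIndependent_iff.mp R.simple_indep (fun i => (c i : ℝ)) h i

lemma cpair_natComb (c : Fin ℓ → ℕ) (α : E) :
    cpair (R.natComb c) α = ∑ i, (c i : ℝ) * cpair (R.simple i) α := by
  simp only [natComb, cpair_sum, cpair_smul]

lemma natComb_eq_zero_of_cpair_nonpos {c : Fin ℓ → ℕ}
    (h : ∀ j, cpair (R.natComb c) (R.simple j) ≤ 0) : R.natComb c = 0 :=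
  sum_smul_eq_zero_of_inner_nonpos _ _ _ (fun _ _ => Nat.cast_nonneg _) fun j _ =>
    (cpair_nonpos_iff _ (R.root_ne_zero _ (R.simple_mem j))).mp (h j)

lemma wle_refl (x : E) : R.wle x x := ⟨0, by simp⟩

lemma sub_natComb_wle (x : E) (c : Fin ℓ → ℕ) : R.wle (x - R.natComb c) x :=
  ⟨c, by rw [sub_sub_cancel]; rfl⟩

lemma wle_sub_natComb {ν z : E} {a c : Fin ℓ → ℕ} (h : R.wle (ν + R.natComb a) z)
    (hca : c ≤ a) : R.wle ν (z - R.natComb c) := by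
  obtain ⟨d, hd : z - (ν + R.natComb a) = R.natComb d⟩ := h
  refine ⟨d + (a - c), ?_⟩
  change _ = R.natComb _
  rw [natComb_add, natComb_tsub R hca, ← hd]
  abel

variable {R}

lemma IsIntegral.sub {x y : E} (hx : R.IsIntegral x) (hy : R.IsIntegral y) :
    R.IsIntegral (x - y) := fun α hα => by
  obtain ⟨m, hm⟩ := hx α hα
  obtain ⟨n, hn⟩ := hy α hα
  exact ⟨m - n, by rw [cpair_sub, hm, hn, Int.cast_sub]⟩

variable (R) in
lemma isIntegral_natComb (c : Fin ℓ → ℕ) : R.IsIntegral (R.natComb c) := fun α hα => by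
  choose n hn using fun i => R.cpair_int α hα (R.simple i) (R.simple_mem i)
  exact ⟨∑ i, (c i : ℤ) * n i, by simp [cpair_natComb, hn]⟩

lemma one_le_cpair {x α : E} (hx : R.IsIntegral x) (hα : α ∈ R.roots) (hpos : 0 < cpair x α) :
    1 ≤ cpair x α := by
  obtain ⟨n, hn⟩ := hx α hα
  rw [hn] at hpos ⊢
  exact Int.cast_one_le_of_pos (Int.cast_pos.mp hpos)

lemma two_le_cpair {x α : E} (hx : R.IsIntegral x) (hα : (2 : ℝ) • α ∈ R.roots)
    (hpos : 0 < cpair x α) : 2 ≤ cpair x α := by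
  have hα0 : α ≠ 0 := fun h => R.root_ne_zero _ hα (by simp [h])
  have := R.one_le_cpair hx hα (by rw [cpair_two_smul_right x hα0]; positivity)
  rw [cpair_two_smul_right x hα0] at this
  linarith

lemma cpair_natComb_indicator_Ici (hBC : R.IsTypeBC) (h j : Fin ℓ) :
    cpair (R.natComb ((Set.Ici h).indicator 1)) (R.simple j) =
      if j = h then (if (h : ℕ) = ℓ - 1 then 2 else 1)
      else if (j : ℕ) + 1 = h then -1 else 0 := by
  rw [cpair_natComb, ← sum_Ici_cartanB ℓ h j]
  refine sum_congr rfl fun i _ => ?_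
  rw [hBC.1 j i]
  by_cases hi : h ≤ i <;> simp [Set.indicator, hi, cartanB]

lemma IsDominant.sub_natComb_indicator_Ici (hBC : R.IsTypeBC) {x : E} (hx : R.IsDominant x)
    {h : Fin ℓ} (hpos : 0 < cpair x (R.simple h)) :
    R.IsDominant (x - R.natComb ((Set.Ici h).indicator 1)) := by
  refine ⟨hx.1.sub (R.isIntegral_natComb _), fun j => ?_⟩
  rw [cpair_sub, R.cpair_natComb_indicator_Ici hBC]
  split_ifs with hjh hlast
  · subst hjh; linarith [R.two_le_cpair hx.1 ((hBC.2 j).1 hlast) hpos]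
  · subst hjh; linarith [R.one_le_cpair hx.1 (R.simple_mem j) hpos]
  all_goals linarith [hx.2 j]

lemma cpair_simple_eq_zero_of_minimal (hBC : R.IsTypeBC) {x y ν : E} (hx : R.IsDominant x)
    (hle : R.wle (ν + ∑ i, R.simple i) (x + y))
    (hmin : ∀ x', R.IsDominant x' → R.wle x' x → R.wle ν (x' + y) → x' = x) (h : Fin ℓ) :
    cpair x (R.simple h) = 0 := by
  by_contra hne
  set c : Fin ℓ → ℕ := (Set.Ici h).indicator 1
  have hdom := hx.sub_natComb_indicator_Ici hBC (lt_of_le_of_ne (hx.2 h) (Ne.symm hne))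
  have hν : R.wle ν (x - R.natComb c + y) := by
    rw [sub_add_eq_add_sub]
    exact R.wle_sub_natComb (R.natComb_one ▸ hle) (Set.indicator_le_self _ _)
  have hc : c = 0 :=
    R.natComb_eq_zero_iff.mp (sub_eq_self.mp (hmin _ hdom (R.sub_natComb_wle x c) hν))
  simpa [c] using congr_fun hc h

lemma not_wle_add_sum_simple (hℓ : 1 ≤ ℓ) {w ν : E} (hw : ∀ j, cpair w (R.simple j) = 0)
    (hν : R.IsDominant ν) : ¬ R.wle (ν + ∑ i, R.simple i) w := by
  rintro ⟨d, hd : w - (ν + ∑ i, R.simple i) = R.natComb d⟩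
  have hz : w - ν = R.natComb (d + 1) := by
    rw [natComb_add, natComb_one, ← hd]; abel
  have hz0 := R.natComb_eq_zero_of_cpair_nonpos fun j => by
    rw [← hz, cpair_sub, hw j]; linarith [hν.2 j]
  simpa using congr_fun (R.natComb_eq_zero_iff.mp hz0) ⟨0, hℓ⟩

end NRRootSystemData

variable {ℓ : ℕ}

/-- In the non-reduced irreducible root system of type BC_ℓ there are no
low triples. -/
theorem statement12 (R : NRRootSystemData ℓ E) (hℓ : 1 ≤ ℓ)
    (hBC : R.IsTypeBC) :
    ∀ lam mu nu : E, ¬ R.LowTriple lam mu nu := by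
  rintro lam mu nu ⟨hlam, hmu, hnu, hmin, hle⟩
  have hlam0 := R.cpair_simple_eq_zero_of_minimal hBC hlam hle fun lam' hlam' hle' hν =>
    (hmin lam' mu hlam' hmu hle' (R.wle_refl mu) hν).1
  have hmu0 := R.cpair_simple_eq_zero_of_minimal hBC hmu (add_comm lam mu ▸ hle)
    fun mu' hmu' hle' hν =>
      (hmin lam mu' hlam hmu' (R.wle_refl lam) hle' (add_comm mu' lam ▸ hν)).2
  exact R.not_wle_add_sum_simple hℓ (fun j => by rw [cpair_add, hlam0 j, hmu0 j, add_zero]) hnu hle
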